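/- Let p be a prime and k, s ≥ 1 integers. Then in ℚ_p: (p^k)^s · H_{p^k}(s) = ∑_{l ≥ 0} binom(−s,l) · p^{s+l} · H_p(s+l) · ∑_{u=1}^{l+1} 𝔹_u^l · (1 − p^{(u+s)k})/(1 − p^{u+s}), the family indexed by l ≥ 0 being summable in ℚ_p. -/

import Mathlib

/-!
Removing the multiples of `p` from `H_{p^(j+1)}(s)` leaves `p^(-s) H_{p^j}(s)` plus the sum of
`(r + p m)^(-s)` over `0 < r < p`, `m < p^j`, so `p^(ks) H_{p^k}(s)` telescopes into these layers.
Since `r` is a `p`-adic unit and `p m` is not, `(r + p m)^(-s)` is a convergent binomial series in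
`p m / r`; summing `m^l` over `m < p^j` by Faulhaber's formula turns layer `j` into a series in `l`
whose coefficients are `H_p(s+l)` times powers `p^((u+s) j)`, and the geometric sum over `j < k`
produces the quotients `(1 - p^((u+s) k)) / (1 - p^(u+s))`.
-/
open Finset

/-- The generalized binomial coefficient `binom(−s,l) = (−1)^l · C(s+l−1, l) ∈ ℤ`. -/
def negBinom (s l : ℕ) : ℤ := (-1) ^ l * (Nat.choose (s + l - 1) l : ℤ)

/-- The Faulhaber coefficient `𝔹_u^l = (1/(l+1))·C(l+1,u)·B_{l+1−u} ∈ ℚ`, with `B_1 = −1/2`. -/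
noncomputable def faulhaberB (u l : ℕ) : ℚ :=
  (1 / ((l : ℚ) + 1)) * (Nat.choose (l + 1) u : ℚ) * bernoulli (l + 1 - u)

/-- The depth-one multiple harmonic sum `H_N(s) = ∑_{0<n<N} 1/n^s`, viewed in `ℚ_p`. -/
noncomputable def H1 (p : ℕ) [Fact p.Prime] (N s : ℕ) : ℚ_[p] :=
  ∑ n ∈ Finset.Ioo 0 N, 1 / (n : ℚ_[p]) ^ s

section Binomial

variable {𝕜 : Type*} [NormedField 𝕜]

theorem negBinom_zero_left (l : ℕ) : negBinom 0 l = if l = 0 then 1 else 0 := by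
  rcases l with _ | l <;> simp [negBinom]

theorem negBinom_succ_left (t l : ℕ) : negBinom (t + 1) l = (-1) ^ l * ((l + t).choose t : ℤ) := by
  rw [negBinom, show t + 1 + l - 1 = l + t by omega, Nat.choose_symm_add]

theorem hasSum_negBinom_mul_pow (s : ℕ) {x : 𝕜} (hx : ‖x‖ < 1) :
    HasSum (fun l ↦ (negBinom s l : 𝕜) * x ^ l) (1 / (1 + x) ^ s) := by
  rcases s with _ | t
  · have hδ : (fun l ↦ (negBinom 0 l : 𝕜) * x ^ l) = fun l ↦ if l = 0 then 1 else 0 := by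
      ext l
      rw [negBinom_zero_left]
      split_ifs with hl <;> simp [hl]
    rw [hδ, pow_zero, div_one]
    exact hasSum_ite_eq 0 1
  · have h := hasSum_choose_mul_geometric_of_norm_lt_one t (r := -x) (by rwa [norm_neg])
    rw [sub_neg_eq_add] at h
    convert h using 2 with l
    rw [negBinom_succ_left, neg_pow]
    push_cast
    ring

theorem hasSum_negBinom_mul_pow_div (s : ℕ) {a b : 𝕜} (h : ‖b‖ < ‖a‖) :
    HasSum (fun l ↦ (negBinom s l : 𝕜) * b ^ l / a ^ (s + l)) (1 / (a + b) ^ s) := by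
  have ha : a ≠ 0 := norm_pos_iff.mp ((norm_nonneg b).trans_lt h)
  have hx : ‖b / a‖ < 1 := by rwa [norm_div, div_lt_one (norm_pos_iff.mpr ha)]
  convert (hasSum_negBinom_mul_pow s hx).div_const (a ^ s) using 1
  · ext l
    rw [div_pow, pow_add, mul_div_assoc, mul_div_assoc, div_div, mul_comm (a ^ l)]
  · rw [one_add_div ha, div_pow, one_div_div, div_div_cancel_left' (pow_ne_zero s ha), one_div]

end Binomial

theorem sum_range_pow_eq_sum_faulhaberB {K : Type*} [Field K] [CharZero K] (l N : ℕ) :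
    ∑ m ∈ range N, (m : K) ^ l = ∑ u ∈ Icc 1 (l + 1), (faulhaberB u l : K) * (N : K) ^ u := by
  have hℚ : ∑ m ∈ range N, (m : ℚ) ^ l = ∑ u ∈ Icc 1 (l + 1), faulhaberB u l * (N : ℚ) ^ u := by
    rw [sum_range_pow]
    refine sum_nbij' (fun i ↦ l + 1 - i) (fun u ↦ l + 1 - u) ?_ ?_ ?_ ?_ ?_
    · intro i hi; simp only [mem_range, mem_Icc] at *; omega
    · intro u hu; simp only [mem_range, mem_Icc] at *; omega
    · intro i hi; simp only [mem_range] at hi; omega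
    · intro u hu; simp only [mem_Icc] at hu; omega
    · intro i hi
      rw [mem_range] at hi
      rw [faulhaberB, Nat.choose_symm hi.le, Nat.sub_sub_self hi.le]
      ring
  exact_mod_cast congrArg (Rat.cast : ℚ → K) hℚ

theorem one_sub_pow_div_one_sub_eq_geom_sum {K : Type*} [Field K] {q : K} (hq : q ≠ 1) (k : ℕ) :
    (1 - q ^ k) / (1 - q) = ∑ j ∈ range k, q ^ j := by
  rw [geom_sum_eq hq, ← neg_sub, ← neg_sub q, neg_div_neg_eq]

theorem sum_Ioo_mul_eq {M : Type*} [AddCancelCommMonoid M] (f : ℕ → M) {q : ℕ} (hq : 0 < q)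
    (N : ℕ) :
    ∑ n ∈ Ioo 0 (q * N), f n
      = ∑ m ∈ Ioo 0 N, f (q * m) + ∑ r ∈ Ioo 0 q, ∑ m ∈ range N, f (r + q * m) := by
  have sum_range_eq {g : ℕ → M} {n : ℕ} (hn : 0 < n) :
      ∑ i ∈ range n, g i = g 0 + ∑ i ∈ Ioo 0 n, g i := by
    rw [range_eq_Ico, ← Ioo_insert_left hn, sum_insert left_notMem_Ioo]
  have digits : ∑ n ∈ range (q * N), f n = ∑ m ∈ range N, ∑ r ∈ range q, f (r + q * m) := by
    induction N with
    | zero => simp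
    | succ N ih =>
      rw [Nat.mul_succ, sum_range_add, ih, sum_range_succ]
      simp only [add_comm (q * N)]
  rcases N.eq_zero_or_pos with rfl | hN
  · simp
  apply add_left_cancel (a := f 0)
  have row (m : ℕ) : ∑ r ∈ range q, f (r + q * m) = f (q * m) + ∑ r ∈ Ioo 0 q, f (r + q * m) := by
    rw [sum_range_eq hq, zero_add]
  rw [← sum_range_eq (Nat.mul_pos hq hN), digits, sum_congr rfl fun m _ ↦ row m, sum_add_distrib,
    sum_range_eq (g := fun m ↦ f (q * m)) hN, mul_zero, sum_comm, add_assoc]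

section Padic

variable (p : ℕ) [Fact p.Prime]

/-- The terms of `H_{p^(j+1)}(s)` with `n` prime to `p`, written as `n = r + p m`. -/
noncomputable def unitLayer (j s : ℕ) : ℚ_[p] :=
  ∑ r ∈ Ioo 0 p, ∑ m ∈ range (p ^ j), 1 / ((r + p * m : ℕ) : ℚ_[p]) ^ s

theorem H1_prime_pow_succ (j s : ℕ) :
    H1 p (p ^ (j + 1)) s = H1 p (p ^ j) s / (p : ℚ_[p]) ^ s + unitLayer p j s := by
  rw [H1, pow_succ', sum_Ioo_mul_eq _ (Fact.out : p.Prime).pos, H1, sum_div]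
  congr 1
  refine sum_congr rfl fun m _ ↦ ?_
  rw [Nat.cast_mul, mul_pow, div_div, mul_comm]

theorem prime_pow_pow_mul_H1_eq_sum_unitLayer (k s : ℕ) :
    ((p : ℚ_[p]) ^ k) ^ s * H1 p (p ^ k) s
      = ∑ j ∈ range k, (p : ℚ_[p]) ^ (s * (j + 1)) * unitLayer p j s := by
  have hp : (p : ℚ_[p]) ≠ 0 := Nat.cast_ne_zero.mpr (Fact.out : p.Prime).ne_zero
  induction k with
  | zero => simp [H1, show Ioo 0 1 = ∅ by rfl]
  | succ k ih =>
    rw [sum_range_succ, ← ih, H1_prime_pow_succ]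
    field_simp
    ring

theorem norm_natCast_mul_lt_norm_natCast {r : ℕ} (hr₀ : 0 < r) (hrp : r < p) (m : ℕ) :
    ‖((p * m : ℕ) : ℚ_[p])‖ < ‖(r : ℚ_[p])‖ := by
  rw [Padic.norm_natCast_eq_one_iff.mpr (Nat.coprime_of_lt_prime hr₀.ne' hrp Fact.out)]
  exact Padic.norm_natCast_lt_one_iff.mpr (dvd_mul_right p m)

theorem hasSum_unitLayer (j s : ℕ) :
    HasSum (fun l ↦ (negBinom s l : ℚ_[p]) * (p : ℚ_[p]) ^ l * H1 p p (s + l) *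
      ∑ m ∈ range (p ^ j), (m : ℚ_[p]) ^ l) (unitLayer p j s) := by
  have h := hasSum_sum fun r (hr : r ∈ Ioo 0 p) ↦ hasSum_sum fun m (_ : m ∈ range (p ^ j)) ↦
    hasSum_negBinom_mul_pow_div s
      (norm_natCast_mul_lt_norm_natCast p (mem_Ioo.mp hr).1 (mem_Ioo.mp hr).2 m)
  rw [unitLayer]
  convert h using 1
  · ext l
    rw [H1, mul_assoc, sum_mul_sum, mul_sum]
    refine sum_congr rfl fun r _ ↦ ?_
    rw [mul_sum]
    refine sum_congr rfl fun m _ ↦ ?_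
    push_cast
    ring
  · simp only [Nat.cast_add]

theorem hasSum_mul_unitLayer (j s : ℕ) :
    HasSum (fun l ↦ (negBinom s l : ℚ_[p]) * (p : ℚ_[p]) ^ (s + l) * H1 p p (s + l) *
        ∑ u ∈ Icc 1 (l + 1), (faulhaberB u l : ℚ_[p]) * (p : ℚ_[p]) ^ ((u + s) * j))
      ((p : ℚ_[p]) ^ (s * (j + 1)) * unitLayer p j s) := by
  refine ((hasSum_unitLayer p j s).mul_left ((p : ℚ_[p]) ^ (s * (j + 1)))).congr_fun fun l ↦ ?_
  have hfaulhaber : ∑ u ∈ Icc 1 (l + 1), (faulhaberB u l : ℚ_[p]) * (p : ℚ_[p]) ^ ((u + s) * j)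
      = (p : ℚ_[p]) ^ (s * j) * ∑ m ∈ range (p ^ j), (m : ℚ_[p]) ^ l := by
    rw [sum_range_pow_eq_sum_faulhaberB, mul_sum]
    refine sum_congr rfl fun u _ ↦ ?_
    push_cast
    ring
  rw [hfaulhaber]
  ring

theorem sum_faulhaberB_mul_div_eq_sum_range (l s k : ℕ) :
    ∑ u ∈ Icc 1 (l + 1), (faulhaberB u l : ℚ_[p]) *
        (1 - (p : ℚ_[p]) ^ ((u + s) * k)) / (1 - (p : ℚ_[p]) ^ (u + s))
      = ∑ j ∈ range k, ∑ u ∈ Icc 1 (l + 1),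
          (faulhaberB u l : ℚ_[p]) * (p : ℚ_[p]) ^ ((u + s) * j) := by
  rw [sum_comm]
  refine sum_congr rfl fun u hu ↦ ?_
  have hu₀ : u + s ≠ 0 := by rw [mem_Icc] at hu; omega
  have hne : (p : ℚ_[p]) ^ (u + s) ≠ 1 := by
    exact_mod_cast (Nat.one_lt_pow hu₀ (Fact.out : p.Prime).one_lt).ne'
  rw [mul_div_assoc, pow_mul, one_sub_pow_div_one_sub_eq_geom_sum hne, mul_sum]
  simp only [pow_mul]

end Padic

theorem depth_one_prime_power_general (p : ℕ) [Fact p.Prime] (k s : ℕ) :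
    Summable (fun l : ℕ => (negBinom s l : ℚ_[p]) * (p : ℚ_[p]) ^ (s + l) * H1 p p (s + l) *
        ∑ u ∈ Finset.Icc 1 (l + 1), (faulhaberB u l : ℚ_[p]) *
          (1 - (p : ℚ_[p]) ^ ((u + s) * k)) / (1 - (p : ℚ_[p]) ^ (u + s))) ∧
    ((p : ℚ_[p]) ^ k) ^ s * H1 p (p ^ k) s
      = ∑' l : ℕ, (negBinom s l : ℚ_[p]) * (p : ℚ_[p]) ^ (s + l) * H1 p p (s + l) *
          ∑ u ∈ Finset.Icc 1 (l + 1), (faulhaberB u l : ℚ_[p]) *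
            (1 - (p : ℚ_[p]) ^ ((u + s) * k)) / (1 - (p : ℚ_[p]) ^ (u + s)) := by
  have h := hasSum_sum fun j (_ : j ∈ range k) ↦ hasSum_mul_unitLayer p j s
  simp only [← mul_sum, ← sum_faulhaberB_mul_div_eq_sum_range,
    ← prime_pow_pow_mul_H1_eq_sum_unitLayer] at h
  exact ⟨h.summable, h.tsum_eq.symm⟩

/-- Depth-one reduction to `H_p`:
`(p^k)^s·H_{p^k}(s) = ∑_{l ≥ 0} binom(−s,l)·p^{s+l}·H_p(s+l)·
  ∑_{u=1}^{l+1} 𝔹_u^l·(1 − p^{(u+s)k})/(1 − p^{u+s})`,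
the family indexed by `l` being summable in `ℚ_p`. -/
theorem depth_one_prime_power (p : ℕ) [Fact p.Prime] (k s : ℕ) (hk : 1 ≤ k) (hs : 1 ≤ s) :
    Summable (fun l : ℕ => (negBinom s l : ℚ_[p]) * (p : ℚ_[p]) ^ (s + l) * H1 p p (s + l) *
        ∑ u ∈ Finset.Icc 1 (l + 1), (faulhaberB u l : ℚ_[p]) *
          (1 - (p : ℚ_[p]) ^ ((u + s) * k)) / (1 - (p : ℚ_[p]) ^ (u + s))) ∧
    ((p : ℚ_[p]) ^ k) ^ s * H1 p (p ^ k) s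
      = ∑' l : ℕ, (negBinom s l : ℚ_[p]) * (p : ℚ_[p]) ^ (s + l) * H1 p p (s + l) *
          ∑ u ∈ Finset.Icc 1 (l + 1), (faulhaberB u l : ℚ_[p]) *
            (1 - (p : ℚ_[p]) ^ ((u + s) * k)) / (1 - (p : ℚ_[p]) ^ (u + s)) :=
  depth_one_prime_power_general p k s
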